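/- Let X be a path-connected metric space and p ∈ X with π₁(X,p) totally path disconnected, let E be the quotient of the path space S_p(X) = {continuous f : [0,1] → X with f(0) = p} (with the uniform topology) by path homotopy rel endpoints, and Q : E → X the endpoint map Q([f]) = f(1). Then E is simply connected: E is path connected and every loop in E based at the class [P] of the constant path at p is null-homotopic. -/

import Mathlib

open Set Topology unitInterval

noncomputable section

/-- The loop space `C_p(X)`: continuous maps `f : [0,1] → X` with `f 0 = f 1 = p`,
with the topology of uniform convergence (the compact-open topology on `C(I,X)`,
which agrees with uniform convergence for metric `X`). -/
def LoopSp (X : Type) [TopologicalSpace X] (p : X) : Type :=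
  {f : C(unitInterval, X) // f 0 = p ∧ f 1 = p}

instance (X : Type) [TopologicalSpace X] (p : X) : TopologicalSpace (LoopSp X p) :=
  inferInstanceAs (TopologicalSpace {f : C(unitInterval, X) // f 0 = p ∧ f 1 = p})

/-- The topological fundamental group `π₁(X,p)`: the set of path components of the
loop space `C_p(X)`, with the quotient topology. -/
def TopPi1 (X : Type) [TopologicalSpace X] (p : X) : Type :=
  @Quotient (LoopSp X p) (pathSetoid _)

instance (X : Type) [TopologicalSpace X] (p : X) : TopologicalSpace (TopPi1 X p) :=
  inferInstanceAs (TopologicalSpace (@Quotient (LoopSp X p) (pathSetoid _)))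

/-- The class in `π₁(X,p)` of a loop. -/
def TopPi1.mk {X : Type} [TopologicalSpace X] {p : X} (f : LoopSp X p) : TopPi1 X p :=
  @Quotient.mk _ (pathSetoid _) f

/-- A continuous map sending `p` to `q` induces a map on loops. -/
def LoopSp.map {X Y : Type} [TopologicalSpace X] [TopologicalSpace Y] {p : X} {q : Y}
    (f : C(X, Y)) (hf : f p = q) : LoopSp X p → LoopSp Y q :=
  fun α => ⟨f.comp α.1, by simp [α.2.1, α.2.2, hf]⟩

lemma LoopSp.continuous_map {X Y : Type} [TopologicalSpace X] [TopologicalSpace Y]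
    {p : X} {q : Y} (f : C(X, Y)) (hf : f p = q) :
    Continuous (LoopSp.map f hf) :=
  Continuous.subtype_mk ((ContinuousMap.continuous_postcomp f).comp continuous_subtype_val) _

/-- The homomorphism `f_* : π₁(X,p) → π₁(Y,q)` induced by a continuous map `f` with
`f p = q`, namely `f_*[α] = [f ∘ α]`. -/
def TopPi1.map {X Y : Type} [TopologicalSpace X] [TopologicalSpace Y] {p : X} {q : Y}
    (f : C(X, Y)) (hf : f p = q) : TopPi1 X p → TopPi1 Y q :=
  @Quotient.map _ _ (pathSetoid _) (pathSetoid _) (LoopSp.map f hf)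
    (fun _ _ h => ⟨h.somePath.map (LoopSp.continuous_map f hf)⟩)

/-- A space is totally path disconnected if each of its path components is a single point. -/
def IsTotallyPathDisconnected (Y : Type) [TopologicalSpace Y] : Prop :=
  ∀ x y : Y, Joined x y → x = y

/-- A continuous surjection is a (Hurewicz) fibration if it has the homotopy lifting
property with respect to all spaces. -/
def IsFibration {E B : Type} [TopologicalSpace E] [TopologicalSpace B] (q : E → B) : Prop :=
  Function.Surjective q ∧ Continuous q ∧
    ∀ (Y : Type) [TopologicalSpace Y] (f : Y → E) (F : Y × unitInterval → B),
      Continuous f → Continuous F → (∀ y, F (y, 0) = q (f y)) →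
      ∃ G : Y × unitInterval → E, Continuous G ∧ (∀ z, q (G z) = F z) ∧
        ∀ y, G (y, 0) = f y

end

/-- The path space `S_p(X)`: continuous maps `f : [0,1] → X` with `f 0 = p`, with the
topology of uniform convergence. -/
def PathSp (X : Type) [TopologicalSpace X] (p : X) : Type :=
  {f : C(unitInterval, X) // f 0 = p}

instance (X : Type) [TopologicalSpace X] (p : X) : TopologicalSpace (PathSp X p) :=
  inferInstanceAs (TopologicalSpace {f : C(unitInterval, X) // f 0 = p})

/-- The equivalence relation of path homotopy (homotopy rel endpoints) on `S_p(X)`. -/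
def pathHomSetoid (X : Type) [TopologicalSpace X] (p : X) : Setoid (PathSp X p) where
  r f g := ContinuousMap.HomotopicRel f.1 g.1 {0, 1}
  iseqv := ⟨fun f => ContinuousMap.HomotopicRel.refl f.1, fun h => h.symm,
    fun h h' => h.trans h'⟩

/-- `E`: the quotient of the path space `S_p(X)` by path homotopy rel endpoints, with
the quotient topology. -/
def PathClasses (X : Type) [TopologicalSpace X] (p : X) : Type :=
  Quotient (pathHomSetoid X p)

instance (X : Type) [TopologicalSpace X] (p : X) : TopologicalSpace (PathClasses X p) :=
  inferInstanceAs (TopologicalSpace (Quotient (pathHomSetoid X p)))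

/-- The endpoint map `Q : E → X`, `Q([f]) = f(1)`. -/
def endMap (X : Type) [TopologicalSpace X] (p : X) : PathClasses X p → X :=
  Quotient.lift (fun f : PathSp X p => f.1 1)
    (fun _ _ h => h.some.fst_eq_snd (by simp : (1 : unitInterval) ∈ ({0, 1} : Set unitInterval)))

/-!
Every path `Γ` in `E` starting at `[P]` is the canonical lift `s ↦ [α|[0,s]]` of its projection
`α = Q ∘ Γ`. Indeed, if `f_s` represents `Γ s`, the class of the loop `f_s · (α|[0,s])⁻¹` in
`π₁(X,p)` depends continuously on `s`, because it is a continuous function on the fibre product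
`E ×_X [0,1]`, a quotient of a closed subspace of `S_p(X) × [0,1]`. So it is constant in the
totally path disconnected `π₁(X,p)`, and it is trivial at `s = 0`.

The canonical lifts also make `E` path connected. For a loop `γ` at `[P]` the projection `α` is
null-homotopic, since `[α] = γ 1 = [P]`, and lifting a null-homotopy `α_u` canonically gives the
contraction `u ↦ [α_u|[0,·]]` of `γ`.
-/

open ContinuousMap

namespace Topology.IsQuotientMap

variable {X Y Z : Type*} [TopologicalSpace X] [TopologicalSpace Y] [TopologicalSpace Z]

theorem prodMap_id [LocallyCompactSpace Z] {f : X → Y} (hf : IsQuotientMap f) :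
    IsQuotientMap (Prod.map f (id : Z → Z)) := by
  refine ⟨.of_isOpen_preimage_iff_isOpen fun s => ⟨fun hs => ?_, fun hs => ?_⟩,
    hf.surjective.prodMap Function.surjective_id⟩
  · rw [isOpen_iff_continuous_mem] at hs ⊢
    exact hf.continuous_lift_prod_left hs
  · exact hs.preimage (hf.continuous.prodMap continuous_id)

theorem restrictPreimage_isClosed {f : X → Y} (hf : IsQuotientMap f) {s : Set Y}
    (hs : IsClosed s) : IsQuotientMap (s.restrictPreimage f) := by
  refine isQuotientMap_iff_isClosed.2 ⟨hf.surjective.restrictPreimage _, fun t => ?_⟩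
  rw [hs.isClosedEmbedding_subtypeVal.isClosed_iff_image_isClosed, ← hf.isClosed_preimage,
    (hs.preimage hf.continuous).isClosedEmbedding_subtypeVal.isClosed_iff_image_isClosed,
    image_val_preimage_restrictPreimage]

end Topology.IsQuotientMap

namespace Path.Homotopic

variable {X : Type*} [TopologicalSpace X] {x y : X}

theorem trans_symm_refl_iff {γ δ : Path x y} :
    (γ.trans δ.symm).Homotopic (Path.refl x) ↔ γ.Homotopic δ := by
  refine ⟨fun h => ?_, fun h => (h.hcomp (refl δ.symm)).trans (trans_symm δ)⟩
  rw [← Quotient.eq] at h ⊢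
  simpa [Quotient.mk_trans, Quotient.mk_symm, Quotient.mk_refl] using
    congrArg (fun q => q.trans (Quotient.mk δ)) h

end Path.Homotopic

instance unitInterval.instPathConnectedSpace : PathConnectedSpace I :=
  isPathConnected_iff_pathConnectedSpace.1
    ((convex_Icc (0 : ℝ) 1).isPathConnected (Set.nonempty_Icc.2 zero_le_one))

namespace ContinuousMap

variable {X : Type*} [TopologicalSpace X]

def initSeg (f : C(I, X)) (s : I) : C(I, X) := f.comp ⟨(s * ·), by fun_prop⟩

@[simp]
lemma initSeg_apply (f : C(I, X)) (s t : I) : f.initSeg s t = f (s * t) := rfl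

lemma continuous_initSeg : Continuous fun q : C(I, X) × I => q.1.initSeg q.2 := by
  refine continuous_of_continuous_uncurry _ ?_
  exact continuous_eval.comp ((continuous_fst.comp continuous_fst).prodMk
    ((continuous_snd.comp continuous_fst).mul continuous_snd))

end ContinuousMap

namespace PathSp

variable {X : Type} [TopologicalSpace X] {p : X}

protected def const (p : X) : PathSp X p := ⟨ContinuousMap.const _ p, rfl⟩

def toPath (f : PathSp X p) {x : X} (h : f.1 1 = x) : Path p x := ⟨f.1, f.2, h⟩

def initSeg (f : PathSp X p) (s : I) : PathSp X p :=
  ⟨f.1.initSeg s, by rw [initSeg_apply, mul_zero, f.2]⟩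

lemma initSeg_apply_one (f : PathSp X p) (s : I) : (f.initSeg s).1 1 = f.1 s := by
  simp [initSeg]

lemma initSeg_zero (f : PathSp X p) : f.initSeg 0 = PathSp.const p :=
  Subtype.ext <| ContinuousMap.ext fun t => by simp [initSeg, PathSp.const, ← f.2]

lemma initSeg_one (f : PathSp X p) : f.initSeg 1 = f :=
  Subtype.ext <| ContinuousMap.ext fun t => by simp [initSeg]

lemma continuous_initSeg : Continuous fun q : PathSp X p × I => q.1.initSeg q.2 :=
  (ContinuousMap.continuous_initSeg.comp
    ((continuous_subtype_val.comp continuous_fst).prodMk continuous_snd)).subtype_mk _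

noncomputable def loopBack (f a : PathSp X p) (s : I) (h : f.1 1 = a.1 s) : Path p p :=
  (f.toPath h).trans ((a.initSeg s).toPath (a.initSeg_apply_one s)).symm

lemma continuous_loopBack {ι : Type*} [TopologicalSpace ι] {a : PathSp X p}
    {f : ι → PathSp X p} {s : ι → I} (hf : Continuous f) (hs : Continuous s)
    (h : ∀ i, (f i).1 1 = a.1 (s i)) :
    Continuous fun i => (f i).loopBack a (s i) (h i) := by
  refine Path.continuous_uncurry_iff.mp (Path.trans_continuous_family _ ?_ _
    (Path.symm_continuous_family _ ?_))
  · exact continuous_eval.comp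
      ((continuous_subtype_val.comp (hf.comp continuous_fst)).prodMk continuous_snd)
  · exact continuous_eval.comp ((continuous_subtype_val.comp (continuous_initSeg.comp
      (continuous_const.prodMk (hs.comp continuous_fst)))).prodMk continuous_snd)

end PathSp

namespace LoopSp

variable {X : Type} [TopologicalSpace X] {p : X}

protected def const (p : X) : LoopSp X p := ⟨ContinuousMap.const _ p, rfl, rfl⟩

def ofPath (γ : Path p p) : LoopSp X p := ⟨γ.toContinuousMap, γ.source, γ.target⟩

def toPathSp (ℓ : LoopSp X p) : PathSp X p := ⟨ℓ.1, ℓ.2.1⟩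

lemma continuous_toPathSp : Continuous (toPathSp : LoopSp X p → PathSp X p) :=
  continuous_subtype_val.subtype_mk _

lemma joined_iff_homotopicRel {ℓ ℓ' : LoopSp X p} :
    Joined ℓ ℓ' ↔ HomotopicRel ℓ.1 ℓ'.1 {0, 1} := by
  constructor
  · rintro ⟨γ⟩
    let F : C(I, C(I, X)) := ⟨fun u => (γ u).1, continuous_subtype_val.comp γ.continuous⟩
    refine ⟨{ toContinuousMap := F.uncurry
              map_zero_left := fun t => by simp [F]
              map_one_left := fun t => by simp [F]
              prop' := fun u t ht => ?_ }⟩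
    rcases ht with rfl | rfl
    · exact (γ u).2.1.trans ℓ.2.1.symm
    · exact (γ u).2.2.trans ℓ.2.2.symm
  · rintro ⟨H⟩
    refine ⟨{ toFun := fun u => ⟨H.curry u, ?_, ?_⟩
              continuous_toFun := H.curry.continuous.subtype_mk _
              source' := Subtype.ext H.curry_zero
              target' := Subtype.ext H.curry_one }⟩
    · simp [H.eq_fst u (by simp : (0 : I) ∈ ({0, 1} : Set I)), ℓ.2.1]
    · simp [H.eq_snd u (by simp : (1 : I) ∈ ({0, 1} : Set I)), ℓ'.2.2]

end LoopSp

namespace TopPi1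

variable {X : Type} [TopologicalSpace X] {p : X}

lemma mk_eq_mk_iff {ℓ ℓ' : LoopSp X p} : TopPi1.mk ℓ = TopPi1.mk ℓ' ↔ Joined ℓ ℓ' :=
  Quotient.eq

lemma continuous_mk : Continuous (TopPi1.mk : LoopSp X p → TopPi1 X p) :=
  continuous_quotient_mk'

lemma mk_ofPath_eq_iff {γ γ' : Path p p} :
    TopPi1.mk (LoopSp.ofPath γ) = TopPi1.mk (LoopSp.ofPath γ') ↔ γ.Homotopic γ' :=
  mk_eq_mk_iff.trans LoopSp.joined_iff_homotopicRel

lemma continuous_mk_ofPath : Continuous fun γ : Path p p => TopPi1.mk (LoopSp.ofPath γ) :=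
  continuous_mk.comp (continuous_induced_dom.subtype_mk _)

end TopPi1

namespace PathClasses

variable {X : Type} [TopologicalSpace X] {p : X}

def mk : PathSp X p → PathClasses X p := Quotient.mk _

lemma isQuotientMap_mk : IsQuotientMap (mk : PathSp X p → PathClasses X p) :=
  isQuotientMap_quotient_mk'

lemma mk_surjective : Function.Surjective (mk : PathSp X p → PathClasses X p) :=
  Quotient.mk_surjective

lemma mk_eq_mk_iff {f g : PathSp X p} : mk f = mk g ↔ HomotopicRel f.1 g.1 {0, 1} :=
  Quotient.eq

lemma mk_toPathSp_eq_iff {ℓ ℓ' : LoopSp X p} :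
    mk ℓ.toPathSp = mk ℓ'.toPathSp ↔ Joined ℓ ℓ' :=
  mk_eq_mk_iff.trans LoopSp.joined_iff_homotopicRel.symm

lemma endMap_mk (f : PathSp X p) : endMap X p (mk f) = f.1 1 := rfl

lemma continuous_endMap : Continuous (endMap X p) :=
  continuous_quot_lift _ ((continuous_eval_const 1).comp continuous_subtype_val)

def canonicalLift (f : PathSp X p) : C(I, PathClasses X p) :=
  ⟨fun s => mk (f.initSeg s), isQuotientMap_mk.continuous.comp
    (PathSp.continuous_initSeg.comp (continuous_const.prodMk continuous_id))⟩

lemma canonicalLift_apply (f : PathSp X p) (s : I) : canonicalLift f s = mk (f.initSeg s) := rfl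

lemma canonicalLift_zero (f : PathSp X p) : canonicalLift f 0 = mk (PathSp.const p) := by
  rw [canonicalLift_apply, PathSp.initSeg_zero]

lemma canonicalLift_one (f : PathSp X p) : canonicalLift f 1 = mk f := by
  rw [canonicalLift_apply, PathSp.initSeg_one]

lemma continuous_canonicalLift :
    Continuous (canonicalLift : PathSp X p → C(I, PathClasses X p)) :=
  continuous_of_continuous_uncurry _
    (isQuotientMap_mk.continuous.comp PathSp.continuous_initSeg)

instance : PathConnectedSpace (PathClasses X p) where
  nonempty := ⟨mk (PathSp.const p)⟩
  joined e e' := by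
    have joined_base (e : PathClasses X p) : Joined (mk (PathSp.const p)) e := by
      obtain ⟨f, rfl⟩ := mk_surjective e
      exact ⟨⟨canonicalLift f, canonicalLift_zero f, canonicalLift_one f⟩⟩
    exact (joined_base e).symm.trans (joined_base e')

lemma loopBack_homotopic_of_mk_eq {a f g : PathSp X p} {s : I} (hfg : mk f = mk g)
    (hf : f.1 1 = a.1 s) (hg : g.1 1 = a.1 s) :
    (f.loopBack a s hf).Homotopic (g.loopBack a s hg) :=
  Path.Homotopic.hcomp (mk_eq_mk_iff.1 hfg) (Path.Homotopic.refl _)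

lemma loopBack_homotopic_refl_iff {a f : PathSp X p} {s : I} (hf : f.1 1 = a.1 s) :
    (f.loopBack a s hf).Homotopic (Path.refl p) ↔ mk f = mk (a.initSeg s) :=
  Path.Homotopic.trans_symm_refl_iff.trans mk_eq_mk_iff.symm

lemma exists_continuous_loopBack_class [T2Space X] (a : PathSp X p) :
    ∃ D : C({w : PathClasses X p × I // endMap X p w.1 = a.1 w.2}, TopPi1 X p),
      ∀ f s (h : f.1 1 = a.1 s),
        D ⟨(mk f, s), h⟩ = TopPi1.mk (LoopSp.ofPath (f.loopBack a s h)) := by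
  let W : Set (PathClasses X p × I) := {w | endMap X p w.1 = a.1 w.2}
  have hW : IsClosed W :=
    isClosed_eq (continuous_endMap.comp continuous_fst) (a.1.continuous.comp continuous_snd)
  let ρ : C(Prod.map mk id ⁻¹' W, W) :=
    ⟨W.restrictPreimage (Prod.map mk id),
      (isQuotientMap_mk.continuous.prodMap continuous_id).restrictPreimage⟩
  have hρ : IsQuotientMap ρ := isQuotientMap_mk.prodMap_id.restrictPreimage_isClosed hW
  let D₀ : C(Prod.map mk id ⁻¹' W, TopPi1 X p) :=
    ⟨fun z => TopPi1.mk (LoopSp.ofPath (z.1.1.loopBack a z.1.2 z.2)),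
      TopPi1.continuous_mk_ofPath.comp (PathSp.continuous_loopBack
        (continuous_fst.comp continuous_subtype_val)
        (continuous_snd.comp continuous_subtype_val) _)⟩
  have hD₀ : Function.FactorsThrough D₀ ρ := by
    rintro ⟨⟨f, s⟩, hf⟩ ⟨⟨g, s'⟩, hg⟩ hfg
    obtain ⟨hfg, rfl : s = s'⟩ := Prod.ext_iff.1 (congrArg Subtype.val hfg)
    exact TopPi1.mk_ofPath_eq_iff.2 (loopBack_homotopic_of_mk_eq hfg hf hg)
  refine ⟨hρ.lift D₀ hD₀, fun f s h => ?_⟩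
  have hρfs : ρ ⟨(f, s), h⟩ = ⟨(mk f, s), h⟩ := rfl
  rw [← hρfs, ← ContinuousMap.comp_apply, hρ.lift_comp]
  rfl

theorem eq_canonicalLift [T2Space X] (htpd : IsTotallyPathDisconnected (TopPi1 X p))
    {Γ : C(I, PathClasses X p)} (hΓ : Γ 0 = mk (PathSp.const p)) {a : PathSp X p}
    (ha : ∀ s, endMap X p (Γ s) = a.1 s) : Γ = canonicalLift a := by
  obtain ⟨D, hD⟩ := exists_continuous_loopBack_class a
  let δ : C(I, TopPi1 X p) := D.comp ⟨fun s => ⟨(Γ s, s), ha s⟩, by fun_prop⟩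
  have hδ (s : I) : δ s = δ 0 :=
    (htpd _ _ ((PathConnectedSpace.joined 0 s).map δ.continuous)).symm
  have end_eq {s : I} {f : PathSp X p} (hf : mk f = Γ s) : f.1 1 = a.1 s := by
    rw [← endMap_mk, hf, ha]
  have hδ_mk (s : I) (f : PathSp X p) (hf : mk f = Γ s) :
      δ s = TopPi1.mk (LoopSp.ofPath (f.loopBack a s (end_eq hf))) := by
    rw [← hD]
    exact congrArg D (Subtype.ext (Prod.ext hf.symm rfl))
  have hδ_zero : δ 0 = TopPi1.mk (LoopSp.ofPath (Path.refl p)) := by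
    rw [hδ_mk 0 (PathSp.const p) hΓ.symm, TopPi1.mk_ofPath_eq_iff, loopBack_homotopic_refl_iff,
      PathSp.initSeg_zero]
  ext s
  obtain ⟨f, hf⟩ := mk_surjective (Γ s)
  rw [canonicalLift_apply, ← hf, ← loopBack_homotopic_refl_iff (end_eq hf),
    ← TopPi1.mk_ofPath_eq_iff, ← hδ_mk s f hf, hδ s, hδ_zero]

noncomputable def liftLoop (ℓ : pathComponent (LoopSp.const p)) :
    LoopSp (PathClasses X p) (mk (PathSp.const p)) :=
  ⟨canonicalLift ℓ.1.toPathSp, canonicalLift_zero _, by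
    rw [canonicalLift_one]; exact (mk_toPathSp_eq_iff.2 ℓ.2).symm⟩

lemma joined_liftLoop (ℓ ℓ' : pathComponent (LoopSp.const p)) :
    Joined (liftLoop ℓ) (liftLoop ℓ') := by
  have : PathConnectedSpace (pathComponent (LoopSp.const p)) :=
    isPathConnected_iff_pathConnectedSpace.1 isPathConnected_pathComponent
  exact (PathConnectedSpace.joined ℓ ℓ').map ((continuous_canonicalLift.comp
    (LoopSp.continuous_toPathSp.comp continuous_subtype_val)).subtype_mk _)

theorem loop_joined_const [T2Space X] (htpd : IsTotallyPathDisconnected (TopPi1 X p))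
    (γ : LoopSp (PathClasses X p) (mk (PathSp.const p))) : Joined γ (LoopSp.const _) := by
  let a : LoopSp X p := ⟨⟨endMap X p ∘ γ.1, continuous_endMap.comp γ.1.continuous⟩,
    congrArg (endMap X p) γ.2.1, congrArg (endMap X p) γ.2.2⟩
  have hγ : γ.1 = canonicalLift a.toPathSp := eq_canonicalLift htpd γ.2.1 fun _ => rfl
  have ha : a ∈ pathComponent (LoopSp.const p) :=
    mk_toPathSp_eq_iff.1 (by rw [← canonicalLift_one a.toPathSp, ← hγ, γ.2.2]; rfl)
  rw [show γ = liftLoop ⟨a, ha⟩ from Subtype.ext hγ]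
  exact joined_liftLoop ⟨a, ha⟩ ⟨LoopSp.const p, mem_pathComponent_self _⟩

end PathClasses

theorem stmt11_general (X : Type) [MetricSpace X] (p : X)
    (htpd : IsTotallyPathDisconnected (TopPi1 X p)) :
    PathConnectedSpace (PathClasses X p) ∧
      ∀ γ : LoopSp (PathClasses X p)
          (Quotient.mk (pathHomSetoid X p) ⟨ContinuousMap.const _ p, rfl⟩),
        TopPi1.mk γ =
          TopPi1.mk (⟨ContinuousMap.const _
                (Quotient.mk (pathHomSetoid X p) ⟨ContinuousMap.const _ p, rfl⟩), rfl, rfl⟩ :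
              LoopSp (PathClasses X p)
                (Quotient.mk (pathHomSetoid X p) ⟨ContinuousMap.const _ p, rfl⟩)) :=
  ⟨inferInstance, fun γ => TopPi1.mk_eq_mk_iff.2 (PathClasses.loop_joined_const htpd γ)⟩

/-- If `X` is a path-connected metric space, `p ∈ X`, and `π₁(X,p)` is totally path
disconnected, then the total space `E` of path-homotopy classes of paths starting at
`p` is simply connected: `E` is path connected and every loop in `E` based at the
class `[P]` of the constant path at `p` is null-homotopic. -/
theorem stmt11 (X : Type) [MetricSpace X] [PathConnectedSpace X] (p : X)
    (htpd : IsTotallyPathDisconnected (TopPi1 X p)) :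
    PathConnectedSpace (PathClasses X p) ∧
      ∀ γ : LoopSp (PathClasses X p)
          (Quotient.mk (pathHomSetoid X p) ⟨ContinuousMap.const _ p, rfl⟩),
        TopPi1.mk γ =
          TopPi1.mk (⟨ContinuousMap.const _
                (Quotient.mk (pathHomSetoid X p) ⟨ContinuousMap.const _ p, rfl⟩), rfl, rfl⟩ :
              LoopSp (PathClasses X p)
                (Quotient.mk (pathHomSetoid X p) ⟨ContinuousMap.const _ p, rfl⟩)) :=
  stmt11_general X p htpd
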